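/- In the graph feedback setting where playing arm a reveals the rewards of all arms in a clique containing a from a fixed clique cover 𝒞 of the feedback graph G, the information ratio of Thompson sampling satisfies Γ_t ≤ |𝒞|/2. -/

import Mathlib

/-! With `Δ_b = P(A* = b) (E[Y_b | A* = b] - E[Y_b])`, independence of `A_t` from `(A*, Y)` and the
matching property give `E[Y_{A*} - Y_{A_t}] = ∑_b Δ_b` and `I(A*; O) = ∑_c P(A* ∈ c) I(A*; Y_c)`,
where `Y_c` is the reward vector seen on the clique `c`. For `b ∈ c` the reward `Y_b` is a
`[0, 1]`-valued function of `Y_c`, so Pinsker's inequality gives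
`I(A*; Y_c) ≥ 2 ∑_{b ∈ c} Δ_b ^ 2 / P(A* = b)`. Cauchy–Schwarz, within each clique against the
weights `P(A* = b)` and then across the `m` cliques, yields `(∑_b Δ_b) ^ 2 ≤ m / 2 * I(A*; O)`. -/

open scoped Classical

noncomputable section

variable {Ω : Type*} [Fintype Ω]

/-- Probability that the random variable `X` takes the value `a`, under the pmf `p`
on the finite sample space `Ω`. -/
def probEq {α : Type*} (p : Ω → ℝ) (X : Ω → α) (a : α) : ℝ :=
  ∑ ω, if X ω = a then p ω else 0

/-- Expectation of `f` under the pmf `p`. -/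
def pmfExp (p : Ω → ℝ) (f : Ω → ℝ) : ℝ := ∑ ω, p ω * f ω

/-- Shannon entropy (in nats) of the distribution of `X` under `p`. -/
def entropyOf {α : Type*} (p : Ω → ℝ) (X : Ω → α) : ℝ :=
  -∑ ω, p ω * Real.log (probEq p X (X ω))

/-- Mutual information `I(X;Y)` under the pmf `p`. -/
def mutualInfo {α β : Type*} (p : Ω → ℝ) (X : Ω → α) (Y : Ω → β) : ℝ :=
  ∑ ω, p ω * Real.log (probEq p (fun ω' => (X ω', Y ω')) (X ω, Y ω) /
    (probEq p X (X ω) * probEq p Y (Y ω)))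

/-- The pmf `p` conditioned on the event `W = c`. -/
def condOn {γ : Type*} (p : Ω → ℝ) (W : Ω → γ) (c : γ) : Ω → ℝ :=
  fun ω => (if W ω = c then p ω else 0) / probEq p W c

/-- Conditional mutual information `I(X;Y ∣ W)` under the pmf `p`. -/
def condMutualInfo {α β γ : Type*} (p : Ω → ℝ) (X : Ω → α) (Y : Ω → β) (W : Ω → γ) : ℝ :=
  ∑ ω, p ω * Real.log
    ((probEq p (fun ω' => (X ω', Y ω', W ω')) (X ω, Y ω, W ω) * probEq p W (W ω)) /
      (probEq p (fun ω' => (X ω', W ω')) (X ω, W ω) *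
        probEq p (fun ω' => (Y ω', W ω')) (Y ω, W ω)))

/-- The history after `t` rounds of the observation process `O`. -/
def history {T : ℕ} {𝒪 : Type*} (O : Fin T → Ω → 𝒪) (t : Fin T) (ω : Ω) :
    Fin T → Option 𝒪 :=
  fun s => if (s : ℕ) < (t : ℕ) then some (O s ω) else none

/-- A map `f : V → Fin m` is a clique covering of `G` if every fiber induces a clique. -/
def IsCliqueCovering {V : Type*} (G : SimpleGraph V) {m : ℕ} (f : V → Fin m) : Prop :=
  ∀ c : Fin m, G.IsClique (f ⁻¹' {c})

open Finset InformationTheory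

theorem three_mul_sq_div_le_klFun {t : ℝ} (ht : 0 ≤ t) :
    3 * (t - 1) ^ 2 / (2 * (t + 2)) ≤ klFun t := by
  -- Since `(t - 1) ^ 2 = (t + 2) ^ 2 - 6 * (t + 2) + 9`, the left side is
  -- `3/2 * (t - 4 + 9/(t + 2))`, and its difference with `klFun` is convex with a critical point at `1`.
  set h : ℝ → ℝ := fun t => klFun t - 3 / 2 * (t - 4 + 9 / (t + 2)) with h_def
  have h' : ∀ x ∈ interior (Set.Ici (0 : ℝ)),
      HasDerivWithinAt h (Real.log x - 3 / 2 * (1 - 9 / (x + 2) ^ 2)) (interior (Set.Ici 0)) x := by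
    rw [interior_Ici]
    intro x hx
    have hx2 : x + 2 ≠ 0 := by linarith [Set.mem_Ioi.mp hx]
    refine HasDerivAt.hasDerivWithinAt ?_
    have := (hasDerivAt_klFun (ne_of_gt hx)).sub
      ((((hasDerivAt_id' x).sub_const 4).add
        ((hasDerivAt_const x (9 : ℝ)).div ((hasDerivAt_id' x).add_const 2) hx2)).const_mul (3 / 2))
    exact this.congr_deriv (by field_simp; ring)
  have h'' : ∀ x ∈ interior (Set.Ici (0 : ℝ)),
      HasDerivWithinAt (fun x => Real.log x - 3 / 2 * (1 - 9 / (x + 2) ^ 2))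
        (x⁻¹ - 27 / (x + 2) ^ 3) (interior (Set.Ici 0)) x := by
    rw [interior_Ici]
    intro x hx
    have hx2 : x + 2 ≠ 0 := by linarith [Set.mem_Ioi.mp hx]
    refine HasDerivAt.hasDerivWithinAt ?_
    have := (Real.hasDerivAt_log (ne_of_gt hx)).sub
      (((hasDerivAt_const x (1 : ℝ)).sub
        ((hasDerivAt_const x (9 : ℝ)).div (((hasDerivAt_id' x).add_const 2).pow 2)
          (pow_ne_zero 2 hx2))).const_mul (3 / 2))
    exact this.congr_deriv (by simp only [Pi.pow_apply]; field_simp; ring)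
  have h''_nonneg : ∀ x ∈ interior (Set.Ici (0 : ℝ)), 0 ≤ x⁻¹ - 27 / (x + 2) ^ 3 := by
    rw [interior_Ici]
    intro x (hx : 0 < x)
    rw [sub_nonneg, div_le_iff₀ (by positivity), ← div_eq_inv_mul, le_div_iff₀ hx]
    nlinarith [sq_nonneg (x - 1)]
  have hcont : ContinuousOn h (Set.Ici 0) :=
    continuous_klFun.continuousOn.sub (continuousOn_const.mul
      ((by fun_prop : Continuous fun x : ℝ => x - 4).continuousOn.add
        (continuousOn_const.div (by fun_prop) fun x hx => by linarith [Set.mem_Ici.mp hx])))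
  have hconv : ConvexOn ℝ (Set.Ici 0) h :=
    convexOn_of_hasDerivWithinAt2_nonneg (convex_Ici 0) hcont h' h'' h''_nonneg
  have hmin : IsMinOn h (Set.Ici 0) 1 := by
    refine hconv.isMinOn_of_rightDeriv_eq_zero (by simp) ?_
    have := (h' 1 (by simp)).hasDerivAt (by simpa using Ioi_mem_nhds one_pos)
    rw [this.hasDerivWithinAt.derivWithin (uniqueDiffWithinAt_Ioi 1)]
    norm_num
  have key : h 1 ≤ h t := hmin ht
  have hq : 3 * (t - 1) ^ 2 / (2 * (t + 2)) = 3 / 2 * (t - 4 + 9 / (t + 2)) := by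
    field_simp
    ring
  simp only [h_def, klFun_one] at key
  norm_num at key
  linarith

theorem three_mul_sq_sub_div_le_mul_log_div {x y : ℝ} (hx : 0 ≤ x) (hy : 0 < y) :
    3 * (x - y) ^ 2 / (2 * (x + 2 * y)) ≤ x * Real.log (x / y) - x + y :=
  calc 3 * (x - y) ^ 2 / (2 * (x + 2 * y)) = y * (3 * (x / y - 1) ^ 2 / (2 * (x / y + 2))) := by
        field_simp
    _ ≤ y * klFun (x / y) := by gcongr; exact three_mul_sq_div_le_klFun (by positivity)
    _ = x * Real.log (x / y) - x + y := by rw [klFun_apply]; field_simp; ring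

/-- Pinsker's inequality for finite measures of equal mass, tested against `f` with values in
`[0, 1]`. -/
theorem sq_sum_mul_sub_sum_mul_le_sum_mul_log_div {ι : Type*} (s : Finset ι) {P Q f : ι → ℝ}
    (hP : ∀ i ∈ s, 0 ≤ P i) (hQ : ∀ i ∈ s, 0 ≤ Q i) (hPQ : ∀ i ∈ s, Q i = 0 → P i = 0)
    (hsum : ∑ i ∈ s, P i = ∑ i ∈ s, Q i) (hf : ∀ i ∈ s, f i ∈ Set.Icc 0 1) :
    2 * (∑ i ∈ s, P i * f i - ∑ i ∈ s, Q i * f i) ^ 2 ≤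
      (∑ i ∈ s, P i) * ∑ i ∈ s, P i * Real.log (P i / Q i) := by
  set d : ι → ℝ := fun i => 3 * (P i - Q i) ^ 2 / (2 * (P i + 2 * Q i)) with hd
  have hd_le : ∑ i ∈ s, d i ≤ ∑ i ∈ s, P i * Real.log (P i / Q i) := by
    calc ∑ i ∈ s, d i ≤ ∑ i ∈ s, (P i * Real.log (P i / Q i) - P i + Q i) := by
          refine sum_le_sum fun i hi => ?_
          rcases (hQ i hi).eq_or_lt with hQi | hQi
          · simp [hd, ← hQi, hPQ i hi hQi.symm]
          · exact three_mul_sq_sub_div_le_mul_log_div (hP i hi) hQi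
      _ = ∑ i ∈ s, P i * Real.log (P i / Q i) := by
          rw [sum_add_distrib, sum_sub_distrib, hsum, sub_add_cancel]
  have hcs : (∑ i ∈ s, (P i - Q i) * (f i - 1 / 2)) ^ 2 ≤
      (∑ i ∈ s, (P i + 2 * Q i) / 3) * ∑ i ∈ s, d i / 2 := by
    refine sum_sq_le_sum_mul_sum_of_sq_le_mul s (fun i hi => ?_) (fun i hi => ?_) fun i hi => ?_
    · have := hP i hi; have := hQ i hi; positivity
    · have := hP i hi; have := hQ i hi; positivity
    obtain ⟨hf0, hf1⟩ := hf i hi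
    rcases (add_nonneg (hP i hi) (mul_nonneg zero_le_two (hQ i hi))).eq_or_lt with h0 | hpos
    · have hPi : P i = 0 := by linarith [hP i hi, hQ i hi]
      have hQi : Q i = 0 := by linarith [hP i hi, hQ i hi]
      simp [hd, hPi, hQi]
    · have hweight : (P i + 2 * Q i) / 3 * (d i / 2) = (P i - Q i) ^ 2 / 4 := by
        simp only [hd]; field_simp; ring
      have hf' : (f i - 1 / 2) ^ 2 ≤ 1 / 4 := by nlinarith
      rw [hweight, mul_pow]
      linarith [mul_le_mul_of_nonneg_left hf' (sq_nonneg (P i - Q i))]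
  have hmass : ∑ i ∈ s, (P i + 2 * Q i) / 3 = ∑ i ∈ s, P i := by
    rw [← sum_div, sum_add_distrib, ← mul_sum, ← hsum]; ring
  have hcentre : ∑ i ∈ s, P i * f i - ∑ i ∈ s, Q i * f i =
      ∑ i ∈ s, (P i - Q i) * (f i - 1 / 2) := by
    simp only [sub_mul, mul_sub, sum_sub_distrib, ← sum_mul, hsum]
    ring
  rw [hcentre]
  calc 2 * (∑ i ∈ s, (P i - Q i) * (f i - 1 / 2)) ^ 2
      ≤ (∑ i ∈ s, P i) * ∑ i ∈ s, d i := by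
        rw [hmass, ← sum_div] at hcs; linarith
    _ ≤ (∑ i ∈ s, P i) * ∑ i ∈ s, P i * Real.log (P i / Q i) :=
        mul_le_mul_of_nonneg_left hd_le (sum_nonneg hP)

theorem sq_sum_le_card_div_two_mul_sum_mul {ι κ : Type*} [Fintype ι] [Fintype κ] [DecidableEq κ]
    (cls : ι → κ) {w D : ι → ℝ} (I : κ → ℝ) (hw : ∀ i, 0 ≤ w i) (hD : ∀ i, w i = 0 → D i = 0)
    (hI : ∀ c, 2 * ∑ i with cls i = c, D i ^ 2 / w i ≤ I c) :
    (∑ i, D i) ^ 2 ≤ Fintype.card κ / 2 * ∑ i, w i * I (cls i) := by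
  have hcs : ∀ c, (∑ i with cls i = c, D i) ^ 2 ≤
      (∑ i with cls i = c, w i) * ∑ i with cls i = c, D i ^ 2 / w i := fun c =>
    sum_sq_le_sum_mul_sum_of_sq_le_mul _ (fun i _ => hw i)
      (fun i _ => div_nonneg (sq_nonneg _) (hw i)) fun i _ => by
        rcases (hw i).eq_or_lt with h0 | hpos
        · simp [hD i h0.symm]
        · rw [mul_div_cancel₀ _ hpos.ne']
  calc (∑ i, D i) ^ 2 = (∑ c, ∑ i with cls i = c, D i) ^ 2 := by
        rw [sum_fiberwise]
    _ ≤ Fintype.card κ * ∑ c, (∑ i with cls i = c, D i) ^ 2 := sq_sum_le_card_mul_sum_sq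
    _ ≤ Fintype.card κ * ∑ c, (∑ i with cls i = c, w i) * (I c / 2) := by
        gcongr with c
        refine (hcs c).trans (mul_le_mul_of_nonneg_left (by linarith [hI c]) ?_)
        exact sum_nonneg fun i _ => hw i
    _ = Fintype.card κ / 2 * ∑ i, w i * I (cls i) := by
        rw [← sum_fiberwise univ cls (fun i => w i * I (cls i)), mul_sum, mul_sum]
        refine sum_congr rfl fun c _ => ?_
        rw [sum_mul, mul_sum, mul_sum]
        refine sum_congr rfl fun i hi => ?_
        rw [(mem_filter.mp hi).2]
        ring

def indicatorCov {γ : Type*} (p : Ω → ℝ) (B : Ω → γ) (b : γ) (X : Ω → ℝ) : ℝ :=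
  pmfExp p (fun ω => if B ω = b then X ω else 0) - probEq p B b * pmfExp p X

def cliqueObs {V : Type*} {m : ℕ} (cls : V → Fin m) (c : Fin m) (y : V → ℝ) : V → Option ℝ :=
  fun v => if cls v = c then some (y v) else none

def IndepFunPmf {α β : Type*} (p : Ω → ℝ) (A : Ω → α) (W : Ω → β) : Prop :=
  ∀ a w, probEq p (fun ω => (A ω, W ω)) (a, w) = probEq p A a * probEq p W w

section FiniteProbability

variable {α β γ ζ : Type*} {p : Ω → ℝ}

theorem probEq_nonneg (hp : ∀ ω, 0 ≤ p ω) (X : Ω → α) (a : α) : 0 ≤ probEq p X a :=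
  sum_nonneg fun ω _ => by split_ifs <;> simp [hp ω]

theorem probEq_prod_le_probEq_snd (hp : ∀ ω, 0 ≤ p ω) (B : Ω → γ) (Z : Ω → ζ) (b : γ) (z : ζ) :
    probEq p (fun ω => (B ω, Z ω)) (b, z) ≤ probEq p Z z :=
  sum_le_sum fun ω _ => by
    by_cases hZ : Z ω = z <;> by_cases hB : B ω = b <;> simp [hZ, hB, hp ω]

theorem probEq_eq_pmfExp (X : Ω → α) (a : α) :
    probEq p X a = pmfExp p (fun ω => if X ω = a then 1 else 0) := by
  simp [probEq, pmfExp]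

theorem pmfExp_sub (X X' : Ω → ℝ) :
    pmfExp p (fun ω => X ω - X' ω) = pmfExp p X - pmfExp p X' := by
  simp [pmfExp, mul_sub, sum_sub_distrib]

theorem sum_mul_comp_eq_sum_probEq (Z : Ω → ζ) (g : ζ → ℝ) {s : Finset ζ} (hs : ∀ ω, Z ω ∈ s) :
    ∑ ω, p ω * g (Z ω) = ∑ z ∈ s, probEq p Z z * g z := by
  simp only [probEq, sum_mul, ite_mul, zero_mul]
  rw [sum_comm]
  exact sum_congr rfl fun ω _ => by simp [hs ω]

theorem pmfExp_ite_comp_eq_sum_probEq (B : Ω → γ) (Z : Ω → ζ) (b : γ) (g : ζ → ℝ)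
    {s : Finset ζ} (hs : ∀ ω, Z ω ∈ s) :
    pmfExp p (fun ω => if B ω = b then g (Z ω) else 0) =
      ∑ z ∈ s, probEq p (fun ω => (B ω, Z ω)) (b, z) * g z := by
  have hweight : ∀ z, probEq (fun ω => if B ω = b then p ω else 0) Z z =
      probEq p (fun ω => (B ω, Z ω)) (b, z) := fun z =>
    sum_congr rfl fun ω _ => by by_cases hB : B ω = b <;> simp [hB, Prod.ext_iff]
  simp only [← hweight, ← sum_mul_comp_eq_sum_probEq Z g hs, pmfExp, mul_ite, ite_mul, mul_zero,
    zero_mul]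

theorem pmfExp_eq_sum_pmfExp_ite [Fintype γ] (B : Ω → γ) (F : γ → Ω → ℝ) :
    pmfExp p (fun ω => F (B ω) ω) = ∑ b, pmfExp p (fun ω => if B ω = b then F b ω else 0) := by
  simp only [pmfExp]
  rw [sum_comm]
  exact sum_congr rfl fun ω _ => by simp [mul_ite]

theorem indicatorCov_eq_zero_of_probEq_eq_zero (hp : ∀ ω, 0 ≤ p ω) {B : Ω → γ} {b : γ}
    (hb : probEq p B b = 0) (X : Ω → ℝ) : indicatorCov p B b X = 0 := by
  have hzero : ∀ ω, B ω = b → p ω = 0 := fun ω hB => by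
    have := (sum_eq_zero_iff_of_nonneg fun ω _ => by split_ifs <;> simp [hp ω]).mp hb ω
      (mem_univ ω)
    simpa [hB] using this
  have : pmfExp p (fun ω => if B ω = b then X ω else 0) = 0 :=
    sum_eq_zero fun ω _ => by by_cases hB : B ω = b <;> simp [hB, hzero ω]
  simp [indicatorCov, this, hb]

theorem two_mul_indicatorCov_sq_div_le (hp : ∀ ω, 0 ≤ p ω) (hpsum : ∑ ω, p ω = 1)
    (B : Ω → γ) (Z : Ω → ζ) (b : γ) (g : ζ → ℝ) (hg : ∀ ω, g (Z ω) ∈ Set.Icc 0 1) :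
    2 * indicatorCov p B b (fun ω => g (Z ω)) ^ 2 / probEq p B b ≤
      pmfExp p (fun ω => if B ω = b then Real.log (probEq p (fun ω' => (B ω', Z ω')) (b, Z ω) /
        (probEq p B b * probEq p Z (Z ω))) else 0) := by
  set s := univ.image Z
  have hs : ∀ ω, Z ω ∈ s := fun ω => mem_image_of_mem Z (mem_univ ω)
  set J : ζ → ℝ := fun z => probEq p (fun ω => (B ω, Z ω)) (b, z)
  rw [pmfExp_ite_comp_eq_sum_probEq B Z b
    (fun z => Real.log (J z / (probEq p B b * probEq p Z z))) hs]
  rcases (probEq_nonneg hp B b).eq_or_lt with h0 | hpos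
  · simp [← h0]
  have hJ : ∑ z ∈ s, J z = probEq p B b := by
    rw [probEq_eq_pmfExp, pmfExp_ite_comp_eq_sum_probEq B Z b (fun _ => 1) hs]
    simp only [mul_one, J]
  have hQ : ∑ z ∈ s, probEq p B b * probEq p Z z = probEq p B b := by
    have := sum_mul_comp_eq_sum_probEq (p := p) Z (fun _ => 1) hs
    simp only [mul_one] at this
    rw [← mul_sum, ← this, hpsum, mul_one]
  have hcov : indicatorCov p B b (fun ω => g (Z ω)) =
      ∑ z ∈ s, J z * g z - ∑ z ∈ s, probEq p B b * probEq p Z z * g z := by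
    rw [indicatorCov, pmfExp_ite_comp_eq_sum_probEq B Z b g hs, pmfExp,
      sum_mul_comp_eq_sum_probEq Z g hs, mul_sum]
    simp only [mul_assoc, J]
  have hpinsker := sq_sum_mul_sub_sum_mul_le_sum_mul_log_div s (P := J) (f := g)
    (fun z _ => probEq_nonneg hp _ _)
    (fun z _ => mul_nonneg hpos.le (probEq_nonneg hp Z z))
    (fun z _ hz => le_antisymm
      ((probEq_prod_le_probEq_snd hp B Z b z).trans_eq
        ((mul_eq_zero.mp hz).resolve_left hpos.ne'))
      (probEq_nonneg hp _ _))
    (hJ.trans hQ.symm)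
    (fun z hz => by obtain ⟨ω, -, rfl⟩ := mem_image.mp hz; exact hg ω)
  rw [hcov, div_le_iff₀ hpos]
  rw [hJ] at hpinsker
  linarith

theorem two_mul_sum_indicatorCov_sq_div_le_mutualInfo [Fintype γ] (hp : ∀ ω, 0 ≤ p ω)
    (hpsum : ∑ ω, p ω = 1) (B : Ω → γ) (Z : Ω → ζ) (g : γ → ζ → ℝ)
    (hg : ∀ b ω, g b (Z ω) ∈ Set.Icc 0 1) :
    2 * ∑ b, indicatorCov p B b (fun ω => g b (Z ω)) ^ 2 / probEq p B b ≤ mutualInfo p B Z := by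
  have hsplit : mutualInfo p B Z = ∑ b, pmfExp p (fun ω => if B ω = b then
      Real.log (probEq p (fun ω' => (B ω', Z ω')) (b, Z ω) /
        (probEq p B b * probEq p Z (Z ω))) else 0) :=
    pmfExp_eq_sum_pmfExp_ite B fun b ω => Real.log (probEq p (fun ω' => (B ω', Z ω')) (b, Z ω) /
      (probEq p B b * probEq p Z (Z ω)))
  rw [hsplit, mul_sum]
  exact sum_le_sum fun b _ => by
    rw [← mul_div_assoc]; exact two_mul_indicatorCov_sq_div_le hp hpsum B Z b (g b) (hg b)

theorem mutualInfo_nonneg [Fintype γ] (hp : ∀ ω, 0 ≤ p ω) (hpsum : ∑ ω, p ω = 1)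
    (B : Ω → γ) (Z : Ω → ζ) : 0 ≤ mutualInfo p B Z := by
  simpa [indicatorCov, pmfExp] using
    two_mul_sum_indicatorCov_sq_div_le_mutualInfo hp hpsum B Z (fun _ _ => 0) (by simp)

end FiniteProbability

namespace IndepFunPmf

variable {α β γ ζ : Type*} {p : Ω → ℝ}

theorem pmfExp_ite {A : Ω → α} {W : Ω → β} (h : IndepFunPmf p A W) (a : α) (F : β → ℝ) :
    pmfExp p (fun ω => if A ω = a then F (W ω) else 0) =
      probEq p A a * pmfExp p (fun ω => F (W ω)) := by
  have hs : ∀ ω, W ω ∈ univ.image W := fun ω => mem_image_of_mem W (mem_univ ω)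
  rw [pmfExp_ite_comp_eq_sum_probEq A W a F hs, pmfExp, sum_mul_comp_eq_sum_probEq W F hs, mul_sum]
  exact sum_congr rfl fun w _ => by rw [h a w, mul_assoc]

variable {A : Ω → α} {B : Ω → γ} {Y : Ω → β}

theorem probEq_prod (h : IndepFunPmf p A (fun ω => (B ω, Y ω))) (φ : α → β → ζ) (a : α) (z : ζ) :
    probEq p (fun ω => (A ω, φ (A ω) (Y ω))) (a, z) =
      probEq p A a * probEq p (fun ω => φ a (Y ω)) z := by
  rw [probEq_eq_pmfExp, probEq_eq_pmfExp (fun ω => φ a (Y ω))]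
  refine Eq.trans ?_ (h.pmfExp_ite a fun w => if φ a w.2 = z then 1 else 0)
  congr 1
  funext ω
  by_cases hA : A ω = a <;> simp [hA]

theorem probEq_prod_prod (h : IndepFunPmf p A (fun ω => (B ω, Y ω))) (φ : α → β → ζ) (a : α)
    (b : γ) (z : ζ) :
    probEq p (fun ω => (B ω, A ω, φ (A ω) (Y ω))) (b, a, z) =
      probEq p A a * probEq p (fun ω => (B ω, φ a (Y ω))) (b, z) := by
  rw [probEq_eq_pmfExp, probEq_eq_pmfExp (fun ω => (B ω, φ a (Y ω)))]
  convert h.pmfExp_ite a fun w => if (w.1, φ a w.2) = (b, z) then 1 else 0 using 2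
  · funext ω
    by_cases hA : A ω = a <;> simp [hA, and_comm]
  · congr!

theorem mutualInfo_prod_eq_sum [Fintype α] (h : IndepFunPmf p A (fun ω => (B ω, Y ω)))
    (φ : α → β → ζ) :
    mutualInfo p B (fun ω => (A ω, φ (A ω) (Y ω))) =
      ∑ a, probEq p A a * mutualInfo p B (fun ω => φ a (Y ω)) := by
  have hsplit := pmfExp_eq_sum_pmfExp_ite (p := p) A fun a ω =>
    Real.log (probEq p (fun ω' => (B ω', A ω', φ (A ω') (Y ω'))) (B ω, a, φ a (Y ω)) /
      (probEq p B (B ω) * probEq p (fun ω' => (A ω', φ (A ω') (Y ω'))) (a, φ a (Y ω))))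
  refine hsplit.trans (sum_congr rfl fun a _ => ?_)
  simp only [h.probEq_prod, h.probEq_prod_prod]
  rw [h.pmfExp_ite a fun w => Real.log (probEq p A a * probEq p (fun ω' => (B ω', φ a (Y ω')))
    (w.1, φ a w.2) / (probEq p B w.1 * (probEq p A a * probEq p (fun ω' => φ a (Y ω')) (φ a w.2))))]
  rcases eq_or_ne (probEq p A a) 0 with ha | ha
  · simp [ha]
  congr 1
  refine sum_congr rfl fun ω _ => ?_
  dsimp only
  rw [mul_left_comm (probEq p B (B ω)), mul_div_mul_left _ _ ha]

end IndepFunPmf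

theorem pmfExp_sub_eq_sum_indicatorCov {V : Type*} [Fintype V] {p : Ω → ℝ} {Astar At : Ω → V}
    {Y : Ω → V → ℝ} (hindep : IndepFunPmf p At (fun ω => (Astar ω, Y ω)))
    (hmatch : ∀ a, probEq p At a = probEq p Astar a) :
    pmfExp p (fun ω => Y ω (Astar ω) - Y ω (At ω)) =
      ∑ b, indicatorCov p Astar b (fun ω => Y ω b) := by
  have hopt := pmfExp_eq_sum_pmfExp_ite (p := p) Astar fun b ω => Y ω b
  have hplay : pmfExp p (fun ω => Y ω (At ω)) =
      ∑ b, probEq p Astar b * pmfExp p (fun ω => Y ω b) := by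
    rw [pmfExp_eq_sum_pmfExp_ite (p := p) At fun a ω => Y ω a]
    exact sum_congr rfl fun a _ => by rw [hindep.pmfExp_ite a fun w => w.2 a, hmatch]
  rw [pmfExp_sub, hopt, hplay, ← sum_sub_distrib]
  rfl

theorem two_mul_sum_indicatorCov_sq_div_le_mutualInfo_cliqueObs {V : Type*} [Fintype V] {m : ℕ}
    (cls : V → Fin m) {p : Ω → ℝ} (hp : ∀ ω, 0 ≤ p ω) (hpsum : ∑ ω, p ω = 1) (Astar : Ω → V)
    {Y : Ω → V → ℝ} (hY : ∀ ω v, Y ω v ∈ Set.Icc (0 : ℝ) 1) (c : Fin m) :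
    2 * ∑ b with cls b = c, indicatorCov p Astar b (fun ω => Y ω b) ^ 2 / probEq p Astar b ≤
      mutualInfo p Astar (fun ω => cliqueObs cls c (Y ω)) := by
  refine le_of_eq_of_le ?_ (two_mul_sum_indicatorCov_sq_div_le_mutualInfo hp hpsum Astar
    (fun ω => cliqueObs cls c (Y ω)) (fun b z => (z b).getD 0) fun b ω => ?_)
  · rw [sum_filter]
    congr 1
    refine sum_congr rfl fun b _ => ?_
    by_cases hb : cls b = c
    · simp [cliqueObs, hb]
    · simp [cliqueObs, hb, indicatorCov, pmfExp]
  · by_cases hb : cls b = c <;> simp [cliqueObs, hb, hY ω b]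

theorem information_ratio_le_half_clique_cover_general
    {Ω V : Type*} [Fintype Ω] [Fintype V]
    (m : ℕ) (cls : V → Fin m)
    (p : Ω → ℝ) (hp : ∀ ω, 0 ≤ p ω) (hpsum : ∑ ω, p ω = 1)
    (Astar At : Ω → V) (Y : Ω → V → ℝ)
    (hY : ∀ ω v, Y ω v ∈ Set.Icc (0 : ℝ) 1)
    (hmatch : ∀ a : V, probEq p At a = probEq p Astar a)
    (hindep : ∀ (a b : V) (y : V → ℝ),
      probEq p (fun ω => (At ω, Astar ω, Y ω)) (a, b, y) =
        probEq p At a * probEq p (fun ω => (Astar ω, Y ω)) (b, y)) :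
    (pmfExp p (fun ω => Y ω (Astar ω) - Y ω (At ω))) ^ 2 /
        mutualInfo p Astar
          (fun ω => (At ω, fun v : V =>
            if cls v = cls (At ω) then some (Y ω v) else none)) ≤ m / 2 := by
  have hAt_indep : IndepFunPmf p At (fun ω => (Astar ω, Y ω)) := fun a w => hindep a w.1 w.2
  set I : Fin m → ℝ := fun c => mutualInfo p Astar (fun ω => cliqueObs cls c (Y ω))
  have hinfo : mutualInfo p Astar (fun ω => (At ω, cliqueObs cls (cls (At ω)) (Y ω))) =
      ∑ a, probEq p Astar a * I (cls a) := by
    rw [hAt_indep.mutualInfo_prod_eq_sum fun a y => cliqueObs cls (cls a) y]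
    simp only [hmatch, I]
  rw [pmfExp_sub_eq_sum_indicatorCov hAt_indep hmatch]
  refine div_le_of_le_mul₀ (mutualInfo_nonneg hp hpsum _ _) (by positivity) ?_
  refine (sq_sum_le_card_div_two_mul_sum_mul cls I (probEq_nonneg hp Astar)
    (fun b hb => indicatorCov_eq_zero_of_probEq_eq_zero hp hb _)
    (two_mul_sum_indicatorCov_sq_div_le_mutualInfo_cliqueObs cls hp hpsum Astar hY)).trans_eq ?_
  rw [Fintype.card_fin]
  exact congrArg _ hinfo.symm

/-- Graph feedback information ratio bound: if arms are the vertices of a graph `G` with a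
clique cover of size `m` (given by `cls`), playing arm `a` reveals the `[0,1]`-valued
rewards of all arms in its clique, and `A_t` is identically distributed with `A*` and
independent of `(A*, Y)`, then the information ratio satisfies `Γ_t ≤ m/2`. -/
theorem information_ratio_le_half_clique_cover
    {Ω V : Type*} [Fintype Ω] [Fintype V] (G : SimpleGraph V)
    (m : ℕ) (cls : V → Fin m) (hcls : IsCliqueCovering G cls)
    (p : Ω → ℝ) (hp : ∀ ω, 0 ≤ p ω) (hpsum : ∑ ω, p ω = 1)
    (Astar At : Ω → V) (Y : Ω → V → ℝ)
    (hY : ∀ ω v, Y ω v ∈ Set.Icc (0 : ℝ) 1)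
    (hmatch : ∀ a : V, probEq p At a = probEq p Astar a)
    (hindep : ∀ (a b : V) (y : V → ℝ),
      probEq p (fun ω => (At ω, Astar ω, Y ω)) (a, b, y) =
        probEq p At a * probEq p (fun ω => (Astar ω, Y ω)) (b, y)) :
    (pmfExp p (fun ω => Y ω (Astar ω) - Y ω (At ω))) ^ 2 /
        mutualInfo p Astar
          (fun ω => (At ω, fun v : V =>
            if cls v = cls (At ω) then some (Y ω v) else none)) ≤ m / 2 :=
  information_ratio_le_half_clique_cover_general m cls p hp hpsum Astar At Y hY hmatch hindep
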